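/- arXiv:2506.05946 — 5 statements merged into one kernel-verified Lean document; each statement's English description precedes it below -/
import Mathlib

section
/- Let u : εℤ^N → ℝ be 1-Lipschitz, d⁺[u]_i := inf_{j : u_j < 0} (u_j + |j - i|), and sd⁺[u]_i := sup_{j : u_j ≥ 0} (d⁺[u]_j − |j − i|). Then sd⁺[u] is the smallest 1-Lipschitz function w satisfying w_i ≥ d⁺[u]_i at all points where u_i ≥ 0; moreover sd⁺[u]_i = d⁺[u]_i ≥ u_i when u_i ≥ 0, and sd⁺[u]_i ≤ d⁺[u]_i = u_i when u_i < 0. In particular sd⁺[u]_i ≥ 0 if and only if u_i ≥ 0. -/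
noncomputable section

def pt (N : ℕ) (ε : ℝ) (i : Fin N → ℤ) : EuclideanSpace ℝ (Fin N) :=
  (WithLp.equiv 2 (Fin N → ℝ)).symm fun n => ε * (i n)

def LatLip (N : ℕ) (ε : ℝ) (u : (Fin N → ℤ) → ℝ) : Prop :=
  ∀ i j, |u i - u j| ≤ ‖pt N ε i - pt N ε j‖

def dplus (N : ℕ) (ε : ℝ) (u : (Fin N → ℤ) → ℝ) (i : Fin N → ℤ) : ℝ :=
  sInf {x | ∃ j, u j < 0 ∧ x = u j + ‖pt N ε j - pt N ε i‖}

def sdplus (N : ℕ) (ε : ℝ) (u : (Fin N → ℤ) → ℝ) (i : Fin N → ℤ) : ℝ :=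
  sSup {x | ∃ j, 0 ≤ u j ∧ x = dplus N ε u j - ‖pt N ε j - pt N ε i‖}

theorem stmt1 (N : ℕ) (hN : 1 ≤ N) (ε : ℝ) (hε : 0 < ε)
    (u : (Fin N → ℤ) → ℝ) (hLip : LatLip N ε u)
    (hneg : ∃ j, u j < 0) (hpos : ∃ j, 0 ≤ u j) :
    LatLip N ε (sdplus N ε u) ∧
    (∀ i, 0 ≤ u i → sdplus N ε u i ≥ dplus N ε u i) ∧
    (∀ w : (Fin N → ℤ) → ℝ, LatLip N ε w → (∀ i, 0 ≤ u i → w i ≥ dplus N ε u i) →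
      ∀ i, sdplus N ε u i ≤ w i) ∧
    (∀ i, 0 ≤ u i → sdplus N ε u i = dplus N ε u i ∧ u i ≤ dplus N ε u i) ∧
    (∀ i, u i < 0 → sdplus N ε u i ≤ dplus N ε u i ∧ dplus N ε u i = u i) ∧
    (∀ i, 0 ≤ sdplus N ε u i ↔ 0 ≤ u i) := by
  set D : (Fin N → ℤ) → (Fin N → ℤ) → ℝ := fun i j => ‖pt N ε i - pt N ε j‖ with hD
  have Dsymm : ∀ i j, D i j = D j i := fun i j => norm_sub_rev _ _
  have Dself : ∀ i, D i i = 0 := fun i => by simp [hD]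
  have Dtri : ∀ i j k, D i k ≤ D i j + D j k := by
    intro i j k
    have h : pt N ε i - pt N ε k = (pt N ε i - pt N ε j) + (pt N ε j - pt N ε k) := by abel
    simp only [hD]
    rw [h]; exact norm_add_le _ _
  -- sets
  set S : (Fin N → ℤ) → Set ℝ := fun i => {x | ∃ j, u j < 0 ∧ x = u j + D j i} with hS
  have hdp : ∀ i, dplus N ε u i = sInf (S i) := fun i => rfl
  have Sne : ∀ i, (S i).Nonempty := by
    intro i; obtain ⟨j, hj⟩ := hneg; exact ⟨u j + D j i, j, hj, rfl⟩
  have Sbb : ∀ i, BddBelow (S i) := by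
    intro i
    refine ⟨u i, ?_⟩
    rintro x ⟨j, hj, rfl⟩
    have := hLip i j
    have h1 : u i - u j ≤ D i j := le_trans (le_abs_self _) this
    rw [Dsymm j i]; linarith
  have dplus_ge : ∀ i, u i ≤ dplus N ε u i := by
    intro i
    rw [hdp]
    apply le_csInf (Sne i)
    rintro x ⟨j, hj, rfl⟩
    have h1 : u i - u j ≤ D i j := le_trans (le_abs_self _) (hLip i j)
    rw [Dsymm j i]; linarith
  have dplus_eq : ∀ i, u i < 0 → dplus N ε u i = u i := by
    intro i hi
    refine le_antisymm ?_ (dplus_ge i)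
    rw [hdp]
    have : u i + D i i ∈ S i := ⟨i, hi, rfl⟩
    calc sInf (S i) ≤ u i + D i i := csInf_le (Sbb i) this
    _ = u i := by rw [Dself]; ring
  have dplus_lip_half : ∀ i k, dplus N ε u i ≤ dplus N ε u k + D i k := by
    intro i k
    rw [hdp, hdp]
    have : sInf (S i) - D i k ≤ sInf (S k) := by
      apply le_csInf (Sne k)
      rintro x ⟨j, hj, rfl⟩
      have h1 : sInf (S i) ≤ u j + D j i := csInf_le (Sbb i) ⟨j, hj, rfl⟩
      have h2 : D j i ≤ D j k + D k i := Dtri j k i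
      have h3 : D k i = D i k := Dsymm k i
      linarith
    linarith
  have dplus_lip : LatLip N ε (dplus N ε u) := by
    intro i j
    rw [abs_sub_le_iff]
    constructor
    · have := dplus_lip_half i j; linarith
    · have := dplus_lip_half j i; rw [Dsymm j i] at this
      simp only [hD] at this ⊢; linarith
  -- sdplus sets
  set T : (Fin N → ℤ) → Set ℝ := fun i => {x | ∃ j, 0 ≤ u j ∧ x = dplus N ε u j - D j i} with hT
  have hsdp : ∀ i, sdplus N ε u i = sSup (T i) := fun i => rfl
  have Tne : ∀ i, (T i).Nonempty := by
    intro i; obtain ⟨j, hj⟩ := hpos; exact ⟨_, j, hj, rfl⟩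
  have Tba : ∀ i, BddAbove (T i) := by
    intro i
    refine ⟨dplus N ε u i, ?_⟩
    rintro x ⟨j, hj, rfl⟩
    have := dplus_lip_half j i
    linarith
  have sd_le : ∀ i, sdplus N ε u i ≤ dplus N ε u i := by
    intro i
    rw [hsdp]
    apply csSup_le (Tne i)
    rintro x ⟨j, hj, rfl⟩
    have := dplus_lip_half j i
    linarith
  have sd_ge : ∀ i, 0 ≤ u i → dplus N ε u i ≤ sdplus N ε u i := by
    intro i hi
    rw [hsdp]
    have : dplus N ε u i - D i i ∈ T i := ⟨i, hi, rfl⟩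
    have h := le_csSup (Tba i) this
    rw [Dself] at h; linarith
  have sd_lip_half : ∀ i k, sdplus N ε u i ≤ sdplus N ε u k + D i k := by
    intro i k
    rw [hsdp, hsdp]
    apply csSup_le (Tne i)
    rintro x ⟨j, hj, rfl⟩
    have h1 : dplus N ε u j - D j k ≤ sSup (T k) := le_csSup (Tba k) ⟨j, hj, rfl⟩
    have h2 : D j k ≤ D j i + D i k := Dtri j i k
    linarith
  have sd_lip : LatLip N ε (sdplus N ε u) := by
    intro i j
    rw [abs_sub_le_iff]
    constructor
    · have := sd_lip_half i j; simp only [hD] at this ⊢; linarith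
    · have := sd_lip_half j i; rw [Dsymm j i] at this
      simp only [hD] at this ⊢; linarith
  refine ⟨sd_lip, fun i hi => sd_ge i hi, ?_, fun i hi => ⟨le_antisymm (sd_le i) (sd_ge i hi), dplus_ge i⟩, fun i hi => ⟨sd_le i, dplus_eq i hi⟩, ?_⟩
  · intro w hw hwd i
    rw [hsdp]
    apply csSup_le (Tne i)
    rintro x ⟨j, hj, rfl⟩
    have h1 : dplus N ε u j ≤ w j := hwd j hj
    have h2 : w j - w i ≤ D j i := le_trans (le_abs_self _) (hw j i)
    linarith
  · intro i
    constructor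
    · intro h
      by_contra hc
      push_neg at hc
      have h1 := sd_le i
      have h2 := dplus_eq i hc
      linarith
    · intro h
      have := sd_ge i h
      have := dplus_ge i
      linarith
end
end

section
/- Monotonicity of the redistancing operator: let u, u' : εℤ^N → ℝ be 1-Lipschitz with {u < 0}, {u ≥ 0}, {u' < 0}, {u' ≥ 0} nonempty, and let s ≥ 0. If u_i ≤ u'_i − s for all i ∈ εℤ^N, then sd⁺[u]_i ≤ sd⁺[u']_i − s for all i ∈ εℤ^N. -/
noncomputable section

lemma dplus_bddBelow (N : ℕ) (ε : ℝ) (u : (Fin N → ℤ) → ℝ) (hLip : LatLip N ε u)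
    (i : Fin N → ℤ) :
    BddBelow {x | ∃ j, u j < 0 ∧ x = u j + ‖pt N ε j - pt N ε i‖} := by
  refine ⟨u i, ?_⟩
  rintro x ⟨j, hj, rfl⟩
  have := hLip i j
  have h1 : u i - u j ≤ |u i - u j| := le_abs_self _
  have h2 : ‖pt N ε i - pt N ε j‖ = ‖pt N ε j - pt N ε i‖ := norm_sub_rev _ _
  linarith

lemma dplus_le (N : ℕ) (ε : ℝ) (u : (Fin N → ℤ) → ℝ) (hLip : LatLip N ε u)
    (i k : Fin N → ℤ) (hk : u k < 0) :
    dplus N ε u i ≤ u k + ‖pt N ε k - pt N ε i‖ :=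
  csInf_le (dplus_bddBelow N ε u hLip i) ⟨k, hk, rfl⟩

lemma dplus_mono (N : ℕ) (ε : ℝ) (u u' : (Fin N → ℤ) → ℝ) (hLip : LatLip N ε u)
    (hneg' : ∃ j, u' j < 0) (s : ℝ) (hs : 0 ≤ s) (h : ∀ i, u i ≤ u' i - s) (j : Fin N → ℤ) :
    dplus N ε u j + s ≤ dplus N ε u' j := by
  apply le_csInf
  · obtain ⟨k, hk⟩ := hneg'
    exact ⟨u' k + ‖pt N ε k - pt N ε j‖, k, hk, rfl⟩
  · rintro x ⟨k, hk, rfl⟩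
    have hk' : u k < 0 := by have := h k; linarith
    have := dplus_le N ε u hLip j k hk'
    have := h k
    linarith

theorem stmt3 (N : ℕ) (hN : 1 ≤ N) (ε : ℝ) (hε : 0 < ε)
    (u u' : (Fin N → ℤ) → ℝ) (hLip : LatLip N ε u) (hLip' : LatLip N ε u')
    (hneg : ∃ j, u j < 0) (hpos : ∃ j, 0 ≤ u j)
    (hneg' : ∃ j, u' j < 0) (hpos' : ∃ j, 0 ≤ u' j)
    (s : ℝ) (hs : 0 ≤ s) (h : ∀ i, u i ≤ u' i - s) :
    ∀ i, sdplus N ε u i ≤ sdplus N ε u' i - s := by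
  intro i
  obtain ⟨k0, hk0⟩ := hneg'
  -- bddAbove of the sup set for u'
  have hbdd' : BddAbove {x | ∃ j, 0 ≤ u' j ∧ x = dplus N ε u' j - ‖pt N ε j - pt N ε i‖} := by
    refine ⟨u' k0 + ‖pt N ε k0 - pt N ε i‖, ?_⟩
    rintro x ⟨j, hj, rfl⟩
    have h1 := dplus_le N ε u' hLip' j k0 hk0
    have h2 : ‖pt N ε k0 - pt N ε j‖ ≤ ‖pt N ε k0 - pt N ε i‖ + ‖pt N ε i - pt N ε j‖ :=
      norm_sub_le_norm_sub_add_norm_sub _ _ _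
    have h3 : ‖pt N ε i - pt N ε j‖ = ‖pt N ε j - pt N ε i‖ := norm_sub_rev _ _
    linarith
  apply csSup_le
  · obtain ⟨k, hk⟩ := hpos
    exact ⟨dplus N ε u k - ‖pt N ε k - pt N ε i‖, k, hk, rfl⟩
  · rintro x ⟨j, hj, rfl⟩
    have hj' : 0 ≤ u' j := by have := h j; linarith
    have h1 : dplus N ε u' j - ‖pt N ε j - pt N ε i‖ ≤ sdplus N ε u' i :=
      le_csSup hbdd' ⟨j, hj', rfl⟩
    have h2 := dplus_mono N ε u u' hLip ⟨k0, hk0⟩ s hs h j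
    linarith
end
end

section
/- Semiconcavity of the distance function: let E ⊂ ℝ^N be a nonempty closed set, δ > 0, and x ∈ ℝ^N with dist(x, E) ≥ δ. Then there is a universal constant c such that for all h ∈ ℝ^N with |h| ≤ δ/2, dist(x+h, E) − 2 dist(x, E) + dist(x−h, E) ≤ (c/δ)|h|². -/
/-!
If `y` is a nearest point of `E` to `x`, then `dist(x ± h, E) ≤ ‖x - y ± h‖`, so the second
difference of `dist(·, E)` at `x` is dominated by that of the norm at `v = x - y`. By the
parallelogram law, `(‖v + h‖ + ‖v - h‖)² ≤ 2 (‖v + h‖² + ‖v - h‖²) = 4‖v‖² + 4‖h‖²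
≤ (2‖v‖ + ‖h‖² / δ)²` as soon as `δ ≤ ‖v‖`. Taking the infimum over `y ∈ E` instead of a
nearest point, the bound `‖h‖² / δ` holds for every set `E`, so `c = 1` works.
-/

open Metric

variable {V : Type*} [NormedAddCommGroup V] [InnerProductSpace ℝ V]

theorem norm_add_add_norm_sub_le {v h : V} {δ : ℝ} (hδ : 0 < δ) (hv : δ ≤ ‖v‖) :
    ‖v + h‖ + ‖v - h‖ ≤ 2 * ‖v‖ + ‖h‖ ^ 2 / δ := by
  have hpar := parallelogram_law_with_norm ℝ v h
  have hquot : ‖h‖ ^ 2 ≤ ‖v‖ * (‖h‖ ^ 2 / δ) := by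
    rw [mul_div_assoc']
    exact (le_div_iff₀ hδ).2 (by rw [mul_comm]; gcongr)
  refine abs_le_of_sq_le_sq' ?_ (by positivity) |>.2
  nlinarith [sq_nonneg (‖v + h‖ - ‖v - h‖), sq_nonneg (‖h‖ ^ 2 / δ)]

theorem infDist_add_sub_two_mul_infDist_add_infDist_sub_le {E : Set V} {x h : V} {δ : ℝ}
    (hδ : 0 < δ) (hx : δ ≤ infDist x E) :
    infDist (x + h) E - 2 * infDist x E + infDist (x - h) E ≤ ‖h‖ ^ 2 / δ := by
  have hE : E.Nonempty := Set.nonempty_iff_ne_empty.2 fun hE => by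
    rw [hE, infDist_empty] at hx
    linarith
  suffices (infDist (x + h) E + infDist (x - h) E - ‖h‖ ^ 2 / δ) / 2 ≤ infDist x E by linarith
  refine (le_infDist hE).2 fun y hy => ?_
  have hplus : infDist (x + h) E ≤ ‖x - y + h‖ := by
    simpa [dist_eq_norm, add_sub_right_comm] using infDist_le_dist_of_mem (x := x + h) hy
  have hminus : infDist (x - h) E ≤ ‖x - y - h‖ := by
    simpa [dist_eq_norm, sub_right_comm] using infDist_le_dist_of_mem (x := x - h) hy
  have hnorm := norm_add_add_norm_sub_le (h := h) hδ
    (hx.trans (dist_eq_norm x y ▸ infDist_le_dist_of_mem hy))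
  rw [dist_eq_norm]
  linarith

theorem stmt5 :
    ∃ c : ℝ, 0 < c ∧
      ∀ (N : ℕ) (E : Set (EuclideanSpace ℝ (Fin N))), E.Nonempty → IsClosed E →
        ∀ δ : ℝ, 0 < δ → ∀ x : EuclideanSpace ℝ (Fin N), δ ≤ infDist x E →
          ∀ h : EuclideanSpace ℝ (Fin N), ‖h‖ ≤ δ / 2 →
            infDist (x + h) E - 2 * infDist x E + infDist (x - h) E ≤ (c / δ) * ‖h‖ ^ 2 := by
  refine ⟨1, one_pos, fun N E _ _ δ hδ x hx h _ => ?_⟩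
  rw [one_div_mul_eq_div]
  exact infDist_add_sub_two_mul_infDist_add_infDist_sub_le hδ hx
end

section
/- For i ∈ ℝ^N with |i| ≥ 2ε, ε > 0, and any unit vector e ∈ ℝ^N, one has |i + εe| ≤ |i| + ε (i·e)/|i| + ε²/(2(|i| − ε)). -/
open scoped RealInnerProductSpace

/-- With `s = t/R` and `q = r²/(2(R - r))`, the square of the right side exceeds the radicand by
`s² + q² + 2(s + r)q + (2(R - r)q - r²)`; the last bracket vanishes by the choice of `q`. -/
theorem sqrt_sq_add_two_mul_add_sq_le {R r t : ℝ} (hr0 : 0 ≤ r) (hr : r < R)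
    (ht : -(R * r) ≤ t) :
    √(R ^ 2 + 2 * t + r ^ 2) ≤ R + t / R + r ^ 2 / (2 * (R - r)) := by
  have hR : 0 < R := hr0.trans_lt hr
  have hq : 2 * (R - r) * (r ^ 2 / (2 * (R - r))) = r ^ 2 := by
    field_simp [(sub_pos.mpr hr).ne']
  have hq0 : 0 ≤ r ^ 2 / (2 * (R - r)) := div_nonneg (sq_nonneg r) (by linarith)
  obtain ⟨s, rfl⟩ : ∃ s, t = R * s := ⟨t / R, (mul_div_cancel₀ _ hR.ne').symm⟩
  have hs : 0 ≤ s + r := by nlinarith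
  rw [mul_div_cancel_left₀ _ hR.ne']
  generalize r ^ 2 / (2 * (R - r)) = q at hq hq0 ⊢
  rw [Real.sqrt_le_iff]
  constructor
  · linarith
  · nlinarith [mul_nonneg hs hq0, sq_nonneg s, sq_nonneg q]

theorem norm_add_le_norm_add_inner_div_add_sq_div {E : Type*} [NormedAddCommGroup E]
    [InnerProductSpace ℝ E] {x v : E} (hv : ‖v‖ < ‖x‖) :
    ‖x + v‖ ≤ ‖x‖ + ⟪x, v⟫ / ‖x‖ + ‖v‖ ^ 2 / (2 * (‖x‖ - ‖v‖)) := by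
  have hCS : -(‖x‖ * ‖v‖) ≤ ⟪x, v⟫ := neg_le_of_abs_le (abs_real_inner_le_norm x v)
  calc ‖x + v‖ = √(‖x‖ ^ 2 + 2 * ⟪x, v⟫ + ‖v‖ ^ 2) := by
        rw [← norm_add_sq_real, Real.sqrt_sq (norm_nonneg _)]
    _ ≤ _ := sqrt_sq_add_two_mul_add_sq_le (norm_nonneg v) hv hCS

theorem stmt6 (N : ℕ) (ε : ℝ) (hε : 0 < ε)
    (i e : EuclideanSpace ℝ (Fin N)) (hi : 2 * ε ≤ ‖i‖) (he : ‖e‖ = 1) :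
    ‖i + ε • e‖ ≤ ‖i‖ + ε * ⟪i, e⟫ / ‖i‖ + ε ^ 2 / (2 * (‖i‖ - ε)) := by
  have hεe : ‖ε • e‖ = ε := by rw [norm_smul, he, Real.norm_of_nonneg hε.le, mul_one]
  have h := norm_add_le_norm_add_inner_div_add_sq_div (x := i) (v := ε • e) (by linarith)
  rwa [hεe, real_inner_smul_right] at h
end

section
/- Kernel ball estimate: let K : εℤ^N → ℝ satisfy K_j = K_{−j} ≥ 0, Σ_j K_j = 1, and set h := (1/(2N)) Σ_j |j|² K_j. Then for any R > 0 and any i ∈ εℤ^N with |i| ≥ 3R/4, the discrete convolution satisfies (K * |·|)_i := Σ_{j ∈ εℤ^N} K_j |i − j| ≤ |i| + 8N h / R. -/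
/-! Pairing the lattice points `j` and `-j` (the kernel is symmetric), the parallelogram law gives
`‖v - w‖ + ‖v + w‖ ≤ 2 √(‖v‖² + ‖w‖²) ≤ 2 ‖v‖ + ‖w‖² / ‖v‖`. Averaging over `K` turns the
first-order term into `‖v‖` and the second-order one into the second moment `2 N h` divided by
`2 ‖v‖ ≥ 3 R / 2`. -/

noncomputable section

lemma pt_neg (N : ℕ) (ε : ℝ) (j : Fin N → ℤ) : pt N ε (-j) = -pt N ε j := by
  ext n
  simp [pt]

lemma norm_sub_add_norm_add_le {V : Type*} [NormedAddCommGroup V] [InnerProductSpace ℝ V]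
    {v : V} (hv : v ≠ 0) (w : V) :
    ‖v - w‖ + ‖v + w‖ ≤ 2 * ‖v‖ + ‖w‖ ^ 2 / ‖v‖ := by
  have hv' : 0 < ‖v‖ := norm_pos_iff.2 hv
  have hpar := parallelogram_law_with_norm ℝ v w
  have hsq : (‖v - w‖ + ‖v + w‖) ^ 2 ≤ (2 * ‖v‖ + ‖w‖ ^ 2 / ‖v‖) ^ 2 := by
    have hexp : (2 * ‖v‖ + ‖w‖ ^ 2 / ‖v‖) ^ 2
        = 4 * ‖v‖ ^ 2 + 4 * ‖w‖ ^ 2 + (‖w‖ ^ 2 / ‖v‖) ^ 2 := by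
      field_simp
      ring
    nlinarith [sq_nonneg (‖v - w‖ - ‖v + w‖), sq_nonneg (‖w‖ ^ 2 / ‖v‖)]
  exact le_of_pow_le_pow_left₀ two_ne_zero (by positivity) hsq

section SymmetricKernel

variable {G V : Type*} [AddGroup G] [NormedAddCommGroup V] {K : G → ℝ} {p : G → V}

lemma tsum_mul_norm_sub_eq_tsum_mul_norm_add (hsym : ∀ j, K (-j) = K j)
    (hp : ∀ j, p (-j) = -p j) (v : V) :
    ∑' j, K j * ‖v - p j‖ = ∑' j, K j * ‖v + p j‖ := by
  rw [← (Equiv.neg G).tsum_eq]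
  simp [hsym, hp]

lemma summable_mul_norm_add (hsym : ∀ j, K (-j) = K j) (hp : ∀ j, p (-j) = -p j) {v : V}
    (hconv : Summable fun j => K j * ‖v - p j‖) :
    Summable fun j => K j * ‖v + p j‖ := by
  refine ((Equiv.neg G).summable_iff.2 hconv).congr fun j => ?_
  simp [hsym, hp]

theorem tsum_mul_norm_sub_le [InnerProductSpace ℝ V] (hsym : ∀ j, K (-j) = K j)
    (hpos : ∀ j, 0 ≤ K j) (hp : ∀ j, p (-j) = -p j) (hsum : Summable K)
    (hmom : Summable fun j => ‖p j‖ ^ 2 * K j) {v : V} (hv : v ≠ 0)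
    (hconv : Summable fun j => K j * ‖v - p j‖) :
    ∑' j, K j * ‖v - p j‖ ≤ ‖v‖ * ∑' j, K j + (∑' j, ‖p j‖ ^ 2 * K j) / (2 * ‖v‖) := by
  have hconv' := summable_mul_norm_add hsym hp hconv
  have hpair : ∀ j, K j * ‖v - p j‖ + K j * ‖v + p j‖
      ≤ K j * (2 * ‖v‖) + ‖p j‖ ^ 2 * K j / ‖v‖ := fun j =>
    calc K j * ‖v - p j‖ + K j * ‖v + p j‖ = K j * (‖v - p j‖ + ‖v + p j‖) := by ring
      _ ≤ K j * (2 * ‖v‖ + ‖p j‖ ^ 2 / ‖v‖) :=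
          mul_le_mul_of_nonneg_left (norm_sub_add_norm_add_le hv (p j)) (hpos j)
      _ = K j * (2 * ‖v‖) + ‖p j‖ ^ 2 * K j / ‖v‖ := by ring
  have htwice : 2 * ∑' j, K j * ‖v - p j‖
      ≤ 2 * ‖v‖ * ∑' j, K j + (∑' j, ‖p j‖ ^ 2 * K j) / ‖v‖ :=
    calc 2 * ∑' j, K j * ‖v - p j‖
        = ∑' j, (K j * ‖v - p j‖ + K j * ‖v + p j‖) := by
          rw [hconv.tsum_add hconv', ← tsum_mul_norm_sub_eq_tsum_mul_norm_add hsym hp, two_mul]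
      _ ≤ ∑' j, (K j * (2 * ‖v‖) + ‖p j‖ ^ 2 * K j / ‖v‖) :=
          (hconv.add hconv').tsum_le_tsum hpair ((hsum.mul_right _).add (hmom.div_const _))
      _ = 2 * ‖v‖ * ∑' j, K j + (∑' j, ‖p j‖ ^ 2 * K j) / ‖v‖ := by
          rw [(hsum.mul_right _).tsum_add (hmom.div_const _), tsum_mul_right, tsum_div_const,
            mul_comm]
  have hv' : 0 < ‖v‖ := norm_pos_iff.2 hv
  rw [mul_comm (2 : ℝ), ← div_div]
  linarith

end SymmetricKernel

theorem stmt8_general (N : ℕ) (hN : 1 ≤ N) (ε : ℝ)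
    (K : (Fin N → ℤ) → ℝ)
    (hsym : ∀ j, K (-j) = K j) (hpos : ∀ j, 0 ≤ K j)
    (hsum : Summable K) (hmass : ∑' j, K j = 1)
    (hmom : Summable fun j => ‖pt N ε j‖ ^ 2 * K j)
    (h : ℝ) (hh : h = (1 / (2 * N)) * ∑' j, ‖pt N ε j‖ ^ 2 * K j)
    (R : ℝ) (hR : 0 < R) (i : Fin N → ℤ) (hi : 3 * R / 4 ≤ ‖pt N ε i‖)
    (hconv : Summable fun j => K j * ‖pt N ε i - pt N ε j‖) :
    ∑' j, K j * ‖pt N ε i - pt N ε j‖ ≤ ‖pt N ε i‖ + 8 * N * h / R := by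
  have hv : 0 < ‖pt N ε i‖ := by linarith
  have hNpos : (0 : ℝ) < N := by exact_mod_cast hN
  have hmoment : ∑' j, ‖pt N ε j‖ ^ 2 * K j = 2 * N * h := by
    rw [hh]
    field_simp
  have hh0 : 0 ≤ h := by
    rw [hh]
    exact mul_nonneg (by positivity) (tsum_nonneg fun j => mul_nonneg (by positivity) (hpos j))
  have hbound := tsum_mul_norm_sub_le hsym hpos (pt_neg N ε) hsum hmom
    (norm_pos_iff.1 hv) hconv
  rw [hmass, hmoment, mul_one] at hbound
  have htail : 2 * N * h / (2 * ‖pt N ε i‖) ≤ 8 * N * h / R := by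
    rw [div_le_div_iff₀ (by positivity) hR]
    nlinarith [mul_nonneg hNpos.le hh0]
  linarith

theorem stmt8 (N : ℕ) (hN : 1 ≤ N) (ε : ℝ) (hε : 0 < ε)
    (K : (Fin N → ℤ) → ℝ)
    (hsym : ∀ j, K (-j) = K j) (hpos : ∀ j, 0 ≤ K j)
    (hsum : Summable K) (hmass : ∑' j, K j = 1)
    (hmom : Summable fun j => ‖pt N ε j‖ ^ 2 * K j)
    (h : ℝ) (hh : h = (1 / (2 * N)) * ∑' j, ‖pt N ε j‖ ^ 2 * K j)
    (R : ℝ) (hR : 0 < R) (i : Fin N → ℤ) (hi : 3 * R / 4 ≤ ‖pt N ε i‖)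
    (hconv : Summable fun j => K j * ‖pt N ε i - pt N ε j‖) :
    ∑' j, K j * ‖pt N ε i - pt N ε j‖ ≤ ‖pt N ε i‖ + 8 * N * h / R :=
  stmt8_general N hN ε K hsym hpos hsum hmass hmom h hh R hR i hi hconv
end
end
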